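/- Transducer composition (finite counter). Let H₀, H₁, L be finite-dimensional complex inner product spaces, H := H₀ ⊕ H₁, and m ≥ 1 an integer. For 0 ≤ t ≤ m−1 let S_t be a unitary on H ⊕ L, and suppose given vectors ψ_{t,0} ∈ H₀ (0 ≤ t ≤ m, with ψ_{m,0} = 0), ψ_{t,1} ∈ H₁ (1 ≤ t ≤ m), and w_t ∈ L (0 ≤ t ≤ m−1) such that S_t(ψ_{t,0} ⊕ w_t) = (ψ_{t+1,0} + ψ_{t+1,1}) ⊕ w_t for every 0 ≤ t ≤ m−1. On ℂ^{m+1} ⊗ (H ⊕ L) (with orthonormal basis |0⟩,…,|m⟩ of ℂ^{m+1}) define the unitary S := V_c ∘ ( Σ_{t=0}^{m−1} |t⟩⟨t| ⊗ S_t + |m⟩⟨m| ⊗ I ), where V_c acts as |t⟩ ⊗ h ↦ |t+1 mod (m+1)⟩ ⊗ h for h ∈ H and as the identity on ℂ^{m+1} ⊗ L. Then S is unitary and S( |0⟩ ⊗ ψ_{0,0} + w ) = Σ_{t=1}^{m} |t⟩ ⊗ ψ_{t,1} + w, where w := |0⟩ ⊗ w₀ + Σ_{t=1}^{m−1} |t⟩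 ⊗ (ψ_{t,0} + w_t); moreover ‖w‖² = ‖w₀‖² + Σ_{t=1}^{m−1} ( ‖ψ_{t,0}‖² + ‖w_t‖² ). -/

import Mathlib

open scoped InnerProductSpace

open LinearMap

/-- The orthogonal projection onto a submodule, as an endomorphism of the ambient space. -/
noncomputable def projL {X : Type*} [NormedAddCommGroup X] [InnerProductSpace ℂ X]
    (K : Submodule ℂ X) [K.HasOrthogonalProjection] : X →ₗ[ℂ] X :=
  K.subtype ∘ₗ (K.orthogonalProjectionOnto).toLinearMap

/-!
The hypotheses force `L = (H₀ ⊔ H₁)ᗮ`. Then the counter increment `V_c` moves the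
`(H₀ ⊔ H₁)`-component of each counter slot one slot up and keeps the `L`-component in place, which
only permutes the `ℓ²`-mass of the components; the blockwise step is isometric as well, and an
isometry of a finite-dimensional space is bijective.

Input and output both have the form `t ↦ a t + b t` with `a` valued in `H₀ ⊔ H₁` and
`b t = w_t` (`b m = 0`), where `a 0 = 0` and `a t = ψ_{t,0} + ψ_{t,1}` otherwise. The block
transducers send the input to `t ↦ a (t + 1) + b t`, and `V_c` undoes exactly this shift of `a`.
-/

namespace Submodule

variable {𝕜 E : Type*} [RCLike 𝕜] [NormedAddCommGroup E] [InnerProductSpace 𝕜 E]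

theorem eq_orthogonal_of_inner_eq_zero_of_sup_eq_top {K L : Submodule 𝕜 E}
    (hKL : ∀ a ∈ K, ∀ l ∈ L, ⟪a, l⟫_𝕜 = 0) (hsup : K ⊔ L = ⊤) :
    L = Kᗮ := by
  have hle : L ≤ Kᗮ := fun l hl => (mem_orthogonal K l).2 fun a ha => hKL a ha l hl
  refine eq_of_le_of_inf_le_of_sup_le (z := K) hle ?_ ?_
  · rw [inf_comm, K.inf_orthogonal_eq_bot]
    exact bot_le
  · rw [sup_comm L, hsup]
    exact le_top

theorem norm_add_sq_of_mem_of_mem_orthogonal {K : Submodule 𝕜 E} {x y : E} (hx : x ∈ K)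
    (hy : y ∈ Kᗮ) : ‖x + y‖ ^ 2 = ‖x‖ ^ 2 + ‖y‖ ^ 2 := by
  simp only [sq]
  exact norm_add_sq_eq_norm_sq_add_norm_sq_of_inner_eq_zero _ _
    (inner_right_of_mem_orthogonal hx hy)

variable (K : Submodule 𝕜 E) [K.HasOrthogonalProjection]

theorem starProjection_add_of_mem_of_mem_orthogonal {x y : E} (hx : x ∈ K) (hy : y ∈ Kᗮ) :
    K.starProjection (x + y) = x := by
  rw [map_add, starProjection_eq_self_iff.2 hx, (starProjection_apply_eq_zero_iff K).2 hy, add_zero]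

theorem starProjection_orthogonal_add_of_mem_of_mem_orthogonal {x y : E} (hx : x ∈ K)
    (hy : y ∈ Kᗮ) : Kᗮ.starProjection (x + y) = y := by
  rw [map_add, starProjection_orthogonal_apply_eq_zero hx, starProjection_eq_self_iff.2 hy,
    zero_add]

theorem norm_of_permute_starProjection {ι : Type*} [Fintype ι] (e : ι ≃ ι)
    (g h : PiLp 2 (fun _ : ι => E))
    (hh : ∀ t, h t = K.starProjection (g (e t)) + Kᗮ.starProjection (g t)) : ‖h‖ = ‖g‖ := by
  have pythagoras : ∀ x y : E,
      ‖K.starProjection x + Kᗮ.starProjection y‖ ^ 2 =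
        ‖K.starProjection x‖ ^ 2 + ‖Kᗮ.starProjection y‖ ^ 2 := fun x y =>
    norm_add_sq_of_mem_of_mem_orthogonal (K.starProjection_apply_mem x)
      (Kᗮ.starProjection_apply_mem y)
  rw [← sq_eq_sq₀ (norm_nonneg _) (norm_nonneg _), PiLp.norm_sq_eq_of_L2,
    PiLp.norm_sq_eq_of_L2]
  calc ∑ t, ‖h t‖ ^ 2
      = ∑ t, ‖K.starProjection (g (e t))‖ ^ 2 + ∑ t, ‖Kᗮ.starProjection (g t)‖ ^ 2 := by
        simp only [hh, pythagoras, Finset.sum_add_distrib]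
    _ = ∑ t, ‖K.starProjection (g t)‖ ^ 2 + ∑ t, ‖Kᗮ.starProjection (g t)‖ ^ 2 := by
        rw [e.sum_comp (fun t => ‖K.starProjection (g t)‖ ^ 2)]
    _ = ∑ t, ‖g t‖ ^ 2 := by
        simp only [← Finset.sum_add_distrib, ← norm_sq_eq_add_norm_sq_starProjection]

theorem starProjection_shift_add_starProjection_orthogonal {ι : Type*} [AddGroup ι]
    {a b : ι → E} (ha : ∀ t, a t ∈ K) (hb : ∀ t, b t ∈ Kᗮ) (c t : ι) :
    K.starProjection (a (t - c + c) + b (t - c)) + Kᗮ.starProjection (a (t + c) + b t) =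
      a t + b t := by
  rw [sub_add_cancel, K.starProjection_add_of_mem_of_mem_orthogonal (ha _) (hb _),
    K.starProjection_orthogonal_add_of_mem_of_mem_orthogonal (ha _) (hb _)]

end Submodule

theorem PiLp.norm_eq_of_forall_norm_eq {ι : Type*} [Fintype ι] {β : ι → Type*}
    [∀ i, SeminormedAddCommGroup (β i)] {g h : PiLp 2 β} (hgh : ∀ i, ‖h i‖ = ‖g i‖) :
    ‖h‖ = ‖g‖ := by
  simp only [PiLp.norm_eq_of_L2, hgh]

theorem LinearMap.bijective_of_norm_map {𝕜 E : Type*} [NormedField 𝕜] [NormedAddCommGroup E]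
    [NormedSpace 𝕜 E] [FiniteDimensional 𝕜 E] (f : E →ₗ[𝕜] E) (hf : ∀ x, ‖f x‖ = ‖x‖) :
    Function.Bijective f :=
  have hinj : Function.Injective f := (AddMonoidHomClass.isometry_of_norm f hf).injective
  ⟨hinj, LinearMap.injective_iff_surjective.1 hinj⟩

theorem projL_apply {X : Type*} [NormedAddCommGroup X] [InnerProductSpace ℂ X]
    (K : Submodule ℂ X) [K.HasOrthogonalProjection] (x : X) : projL K x = K.starProjection x :=
  rfl

section Counter

variable {X : Type*} {m : ℕ}

theorem counterCatalyst_eq [AddCommMonoid X] {ψ₀ : Fin (m + 1) → X}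
    (hψ₀m : ψ₀ (Fin.last m) = 0) {wt : Fin m → X} {w : Fin (m + 1) → X}
    (hw : ∀ t : Fin (m + 1), w t =
      if h : (t : ℕ) < m then (if (t : ℕ) = 0 then wt ⟨t, h⟩ else ψ₀ t + wt ⟨t, h⟩) else 0)
    (t : Fin (m + 1)) :
    w t = (if (t : ℕ) = 0 then 0 else ψ₀ t) + Fin.snoc (α := fun _ => X) wt 0 t := by
  induction t using Fin.lastCases with
  | last => simp [hw, hψ₀m]
  | cast s => simp [hw]; split_ifs <;> simp

theorem counterInput_eq [AddCommMonoid X] {ψ₀ : Fin (m + 1) → X}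
    (hψ₀m : ψ₀ (Fin.last m) = 0) {wt : Fin m → X} {w v : Fin (m + 1) → X}
    (hw : ∀ t : Fin (m + 1), w t =
      if h : (t : ℕ) < m then (if (t : ℕ) = 0 then wt ⟨t, h⟩ else ψ₀ t + wt ⟨t, h⟩) else 0)
    (hv : ∀ t : Fin (m + 1), v t = (if (t : ℕ) = 0 then ψ₀ 0 else 0) + w t) (t : Fin (m + 1)) :
    v t = ψ₀ t + Fin.snoc (α := fun _ => X) wt 0 t := by
  cases t using Fin.cases <;> simp [hv, counterCatalyst_eq hψ₀m hw]

theorem counterOutput_eq [AddCommMonoid X] {ψ₀ ψ₁ : Fin (m + 1) → X}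
    (hψ₀m : ψ₀ (Fin.last m) = 0) {wt : Fin m → X} {w v : Fin (m + 1) → X}
    (hw : ∀ t : Fin (m + 1), w t =
      if h : (t : ℕ) < m then (if (t : ℕ) = 0 then wt ⟨t, h⟩ else ψ₀ t + wt ⟨t, h⟩) else 0)
    (hv : ∀ t : Fin (m + 1), v t = (if (t : ℕ) = 0 then 0 else ψ₁ t) + w t) (t : Fin (m + 1)) :
    v t = Fin.cons (α := fun _ => X) 0 (fun s => ψ₀ s.succ + ψ₁ s.succ) t +
      Fin.snoc (α := fun _ => X) wt 0 t := by
  cases t using Fin.cases <;> simp [hv, counterCatalyst_eq hψ₀m hw, ← add_assoc, add_comm]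

theorem counterStep_apply [AddCommMonoid X] (S : Fin m → X → X) {ψ₀ ψ₁ : Fin (m + 1) → X}
    (hψ₀m : ψ₀ (Fin.last m) = 0) {wt : Fin m → X}
    (htrans : ∀ t : Fin m, S t (ψ₀ t.castSucc + wt t) = ψ₀ t.succ + ψ₁ t.succ + wt t)
    (t : Fin (m + 1)) :
    (if h : (t : ℕ) < m then S ⟨t, h⟩ (ψ₀ t + Fin.snoc (α := fun _ => X) wt 0 t)
      else ψ₀ t + Fin.snoc (α := fun _ => X) wt 0 t) =
      Fin.cons (α := fun _ => X) 0 (fun s => ψ₀ s.succ + ψ₁ s.succ) (t + 1) +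
        Fin.snoc (α := fun _ => X) wt 0 t := by
  induction t using Fin.lastCases with
  | last => simp [hψ₀m]
  | cast s => simp [Fin.coeSucc_eq_succ, htrans]

theorem norm_sq_counterCatalyst {𝕜 : Type*} [RCLike 𝕜] [NormedAddCommGroup X]
    [InnerProductSpace 𝕜 X] {K : Submodule 𝕜 X} (hm : 0 < m) {ψ₀ : Fin (m + 1) → X}
    (hψ₀ : ∀ t, ψ₀ t ∈ K) {wt : Fin m → X} (hwt : ∀ t, wt t ∈ Kᗮ)
    {w : PiLp 2 (fun _ : Fin (m + 1) => X)}
    (hw : ∀ t : Fin (m + 1), w t =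
      if h : (t : ℕ) < m then (if (t : ℕ) = 0 then wt ⟨t, h⟩ else ψ₀ t + wt ⟨t, h⟩) else 0) :
    ‖w‖ ^ 2 = ‖wt ⟨0, hm⟩‖ ^ 2 +
      ∑ t : Fin m, (if (t : ℕ) = 0 then 0 else ‖ψ₀ t.castSucc‖ ^ 2 + ‖wt t‖ ^ 2) := by
  have hcast : ∀ s : Fin m, ‖w s.castSucc‖ ^ 2 =
      (if (s : ℕ) = 0 then ‖wt s‖ ^ 2 else 0) +
        (if (s : ℕ) = 0 then 0 else ‖ψ₀ s.castSucc‖ ^ 2 + ‖wt s‖ ^ 2) := fun s => by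
    simp only [hw, Fin.val_castSucc, dif_pos s.isLt, Fin.eta]
    split_ifs
    · simp
    · rw [zero_add, Submodule.norm_add_sq_of_mem_of_mem_orthogonal (hψ₀ _) (hwt _)]
  rw [PiLp.norm_sq_eq_of_L2, Fin.sum_univ_castSucc, Finset.sum_congr rfl fun s _ => hcast s,
    Finset.sum_add_distrib, Finset.sum_eq_single_of_mem ⟨0, hm⟩ (Finset.mem_univ _)]
  · simp [hw]
  · intro s _ hs
    rw [if_neg (fun h => hs (Fin.ext h))]

end Counter

theorem stmt12_general {X : Type*} [NormedAddCommGroup X] [InnerProductSpace ℂ X]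
    [FiniteDimensional ℂ X]
    (m : ℕ) (hm : 0 < m)
    (H₀ H₁ L : Submodule ℂ X)
    (hHL : ∀ a ∈ H₀ ⊔ H₁, ∀ l ∈ L, ⟪a, l⟫_ℂ = 0)
    (hfull : H₀ ⊔ H₁ ⊔ L = ⊤)
    (S : Fin m → (X ≃ₗᵢ[ℂ] X))
    (ψ₀ : Fin (m + 1) → X) (hψ₀ : ∀ t, ψ₀ t ∈ H₀) (hψ₀m : ψ₀ (Fin.last m) = 0)
    (ψ₁ : Fin (m + 1) → X) (hψ₁ : ∀ t, ψ₁ t ∈ H₁)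
    (wt : Fin m → X) (hwt : ∀ t, wt t ∈ L)
    (htrans : ∀ t : Fin m, S t (ψ₀ t.castSucc + wt t) = ψ₀ t.succ + ψ₁ t.succ + wt t)
    (Vc Sstep Sfull :
      PiLp 2 (fun _ : Fin (m + 1) => X) →ₗ[ℂ] PiLp 2 (fun _ : Fin (m + 1) => X))
    (hVc : ∀ g : PiLp 2 (fun _ : Fin (m + 1) => X), ∀ t : Fin (m + 1),
        Vc g t = projL (H₀ ⊔ H₁) (g (t - 1)) + projL L (g t))
    (hSstep : ∀ g : PiLp 2 (fun _ : Fin (m + 1) => X), ∀ t : Fin (m + 1),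
        Sstep g t = if h : (t : ℕ) < m then S ⟨t, h⟩ (g t) else g t)
    (hSfull : Sfull = Vc ∘ₗ Sstep)
    (wcat : PiLp 2 (fun _ : Fin (m + 1) => X))
    (hwcat : ∀ t : Fin (m + 1), wcat t =
        if h : (t : ℕ) < m then
          (if (t : ℕ) = 0 then wt ⟨t, h⟩ else ψ₀ t + wt ⟨t, h⟩) else 0)
    (input output : PiLp 2 (fun _ : Fin (m + 1) => X))
    (hinput : ∀ t : Fin (m + 1),
        input t = (if (t : ℕ) = 0 then ψ₀ 0 else 0) + wcat t)
    (houtput : ∀ t : Fin (m + 1),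
        output t = (if (t : ℕ) = 0 then 0 else ψ₁ t) + wcat t) :
    (∀ g, ‖Sfull g‖ = ‖g‖) ∧ Function.Bijective Sfull ∧
    Sfull input = output ∧
    ‖wcat‖ ^ 2 = ‖wt ⟨0, hm⟩‖ ^ 2 +
      ∑ t : Fin m, (if (t : ℕ) = 0 then 0 else ‖ψ₀ t.castSucc‖ ^ 2 + ‖wt t‖ ^ 2) := by
  obtain rfl : L = (H₀ ⊔ H₁)ᗮ :=
    Submodule.eq_orthogonal_of_inner_eq_zero_of_sup_eq_top hHL hfull
  set K := H₀ ⊔ H₁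
  have hψ₀K : ∀ t, ψ₀ t ∈ K := fun t => Submodule.mem_sup_left (hψ₀ t)
  have hψ₁K : ∀ t, ψ₁ t ∈ K := fun t => Submodule.mem_sup_right (hψ₁ t)
  have hnorm : ∀ g, ‖Sfull g‖ = ‖g‖ := fun g => by
    rw [hSfull, LinearMap.comp_apply,
      K.norm_of_permute_starProjection (Equiv.subRight 1) _ _ (hVc _)]
    exact PiLp.norm_eq_of_forall_norm_eq fun t => by rw [hSstep]; split_ifs <;> simp
  refine ⟨hnorm, LinearMap.bijective_of_norm_map _ hnorm, ?_,
    norm_sq_counterCatalyst hm hψ₀K hwt hwcat⟩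
  set a : Fin (m + 1) → X := Fin.cons 0 fun s => ψ₀ s.succ + ψ₁ s.succ
  set b : Fin (m + 1) → X := Fin.snoc (α := fun _ => X) wt 0
  have ha : ∀ t, a t ∈ K := fun t => by
    cases t using Fin.cases <;> simp [a, K.add_mem (hψ₀K _) (hψ₁K _)]
  have hb : ∀ t, b t ∈ Kᗮ := fun t => by
    cases t using Fin.lastCases <;> simp [b, hwt]
  ext t
  rw [hSfull, LinearMap.comp_apply, hVc, hSstep, hSstep, counterInput_eq hψ₀m hwcat hinput,
    counterInput_eq hψ₀m hwcat hinput, counterStep_apply (fun t => S t) hψ₀m htrans,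
    counterStep_apply (fun t => S t) hψ₀m htrans, counterOutput_eq hψ₀m hwcat houtput,
    projL_apply, projL_apply]
  exact K.starProjection_shift_add_starProjection_orthogonal ha hb 1 t

/-- Transducer composition with a finite counter: composing `m` transducers `S_t` on the
space `H ⊕ L` (with `H = H₀ ⊕ H₁`) with the counter-increment `V_c` yields a unitary `S`
on `ℂ^{m+1} ⊗ (H ⊕ L)` that transduces `|0⟩ ⊗ ψ_{0,0}` into `Σ_{t=1}^m |t⟩ ⊗ ψ_{t,1}`
with catalyst `w = |0⟩ ⊗ w₀ + Σ_{t=1}^{m−1} |t⟩ ⊗ (ψ_{t,0} + w_t)` of squared norm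
`‖w₀‖² + Σ_{t=1}^{m−1} (‖ψ_{t,0}‖² + ‖w_t‖²)`. -/
theorem stmt12 {X : Type*} [NormedAddCommGroup X] [InnerProductSpace ℂ X]
    [FiniteDimensional ℂ X]
    (m : ℕ) (hm : 0 < m)
    (H₀ H₁ L : Submodule ℂ X)
    (hH01 : ∀ a ∈ H₀, ∀ b ∈ H₁, ⟪a, b⟫_ℂ = 0)
    (hHL : ∀ a ∈ H₀ ⊔ H₁, ∀ l ∈ L, ⟪a, l⟫_ℂ = 0)
    (hfull : H₀ ⊔ H₁ ⊔ L = ⊤)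
    (S : Fin m → (X ≃ₗᵢ[ℂ] X))
    (ψ₀ : Fin (m + 1) → X) (hψ₀ : ∀ t, ψ₀ t ∈ H₀) (hψ₀m : ψ₀ (Fin.last m) = 0)
    (ψ₁ : Fin (m + 1) → X) (hψ₁ : ∀ t, ψ₁ t ∈ H₁)
    (wt : Fin m → X) (hwt : ∀ t, wt t ∈ L)
    (htrans : ∀ t : Fin m, S t (ψ₀ t.castSucc + wt t) = ψ₀ t.succ + ψ₁ t.succ + wt t)
    (Vc Sstep Sfull :
      PiLp 2 (fun _ : Fin (m + 1) => X) →ₗ[ℂ] PiLp 2 (fun _ : Fin (m + 1) => X))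
    (hVc : ∀ g : PiLp 2 (fun _ : Fin (m + 1) => X), ∀ t : Fin (m + 1),
        Vc g t = projL (H₀ ⊔ H₁) (g (t - 1)) + projL L (g t))
    (hSstep : ∀ g : PiLp 2 (fun _ : Fin (m + 1) => X), ∀ t : Fin (m + 1),
        Sstep g t = if h : (t : ℕ) < m then S ⟨t, h⟩ (g t) else g t)
    (hSfull : Sfull = Vc ∘ₗ Sstep)
    (wcat : PiLp 2 (fun _ : Fin (m + 1) => X))
    (hwcat : ∀ t : Fin (m + 1), wcat t =
        if h : (t : ℕ) < m then
          (if (t : ℕ) = 0 then wt ⟨t, h⟩ else ψ₀ t + wt ⟨t, h⟩) else 0)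
    (input output : PiLp 2 (fun _ : Fin (m + 1) => X))
    (hinput : ∀ t : Fin (m + 1),
        input t = (if (t : ℕ) = 0 then ψ₀ 0 else 0) + wcat t)
    (houtput : ∀ t : Fin (m + 1),
        output t = (if (t : ℕ) = 0 then 0 else ψ₁ t) + wcat t) :
    (∀ g, ‖Sfull g‖ = ‖g‖) ∧ Function.Bijective Sfull ∧
    Sfull input = output ∧
    ‖wcat‖ ^ 2 = ‖wt ⟨0, hm⟩‖ ^ 2 +
      ∑ t : Fin m, (if (t : ℕ) = 0 then 0 else ‖ψ₀ t.castSucc‖ ^ 2 + ‖wt t‖ ^ 2) :=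
  stmt12_general m hm H₀ H₁ L hHL hfull S ψ₀ hψ₀ hψ₀m ψ₁ hψ₁ wt hwt htrans Vc Sstep Sfull hVc hSstep
    hSfull wcat hwcat input output hinput houtput
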